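/- For every h > 0 and every x ∈ ℝ, ∫_ℝ e^{ixξ} (cosh ξ)^{−h} dξ = 2^{h−1} Γ((h+ix)/2) Γ((h−ix)/2) / Γ(h) = 2^{h−1} |Γ((h+ix)/2)|² / Γ(h); in particular the transition density of the additive process with Q(t,ξ) = h(t) ln cosh ξ is p_{t,0}(x) = (2π)^{−1} ∫_ℝ e^{ixξ} e^{−h(t) ln cosh ξ} dξ = (2^{h(t)−2}/π) |Γ((h(t)+ix)/2)|² / Γ(h(t)). -/

import Mathlib

open MeasureTheory Real

/-- `p_{t,0}(x) = (2π)⁻¹ ∫ e^{ixξ} e^{-h(t) ln cosh ξ} dξ`. -/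
noncomputable def pCosh (h : ℝ → ℝ) (t x : ℝ) : ℂ :=
  (((2 * π)⁻¹ : ℝ) : ℂ) *
    ∫ ξ : ℝ, Complex.exp (Complex.I * (x : ℂ) * (ξ : ℂ)) *
      ((Real.exp (-(h t * Real.log (Real.cosh ξ))) : ℝ) : ℂ)

/-!
Substitute `t = σ(2ξ) = e^ξ / (2 cosh ξ)`, where `σ` is the logistic sigmoid. Then
`2t = e^ξ / cosh ξ` and `2(1 - t) = e^{-ξ} / cosh ξ`, so for any `a b : ℂ`
`e^{(a-b)ξ} (cosh ξ)^{-(a+b)} = 2^{a+b} t^a (1-t)^b`, while `dt = 2 t (1-t) dξ`; hence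
`∫ e^{(a-b)ξ} (cosh ξ)^{-(a+b)} dξ = 2^{a+b-1} B(a, b) = 2^{a+b-1} Γ(a)Γ(b)/Γ(a+b)`.
Take `a = (h+ix)/2`, `b = (h-ix)/2 = conj a`, so that `Γ(a)Γ(b) = |Γ(a)|²`.
-/

lemma Complex.ofReal_cpow_eq_exp {x : ℝ} (hx : 0 < x) (s : ℂ) :
    (x : ℂ) ^ s = Complex.exp (Real.log x * s) := by
  rw [Complex.cpow_def_of_ne_zero (Complex.ofReal_ne_zero.mpr hx.ne'), Complex.ofReal_log hx.le]

lemma Complex.betaIntegral_eq_integral_sigmoid (a b : ℂ) :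
    Complex.betaIntegral a b = ∫ u : ℝ, (sigmoid u : ℂ) ^ a * (sigmoid (-u) : ℂ) ^ b := by
  have hsub := integral_image_eq_integral_abs_deriv_smul MeasurableSet.univ
    (fun u _ => (hasDerivAt_sigmoid u).hasDerivWithinAt) sigmoid_injective.injOn
    (fun t : ℝ => (t : ℂ) ^ (a - 1) * (1 - (t : ℂ)) ^ (b - 1))
  rw [Set.image_univ, range_sigmoid, Measure.restrict_univ] at hsub
  rw [Complex.betaIntegral, intervalIntegral.integral_of_le zero_le_one,
    integral_Ioc_eq_integral_Ioo, hsub]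
  congr 1 with u
  have hσ := sigmoid_pos u
  have hσ' : 0 < 1 - sigmoid u := sub_pos.mpr (sigmoid_lt_one u)
  rw [sigmoid_neg, abs_of_pos (mul_pos hσ hσ'), Complex.real_smul, Complex.ofReal_mul,
    show (1 : ℂ) - sigmoid u = ((1 - sigmoid u : ℝ) : ℂ) by push_cast; ring]
  have hσc : (sigmoid u : ℂ) ≠ 0 := Complex.ofReal_ne_zero.mpr hσ.ne'
  have hσc' : ((1 - sigmoid u : ℝ) : ℂ) ≠ 0 := Complex.ofReal_ne_zero.mpr hσ'.ne'
  rw [Complex.cpow_sub _ _ hσc, Complex.cpow_sub _ _ hσc', Complex.cpow_one, Complex.cpow_one]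
  field_simp

lemma Real.sigmoid_two_mul (ξ : ℝ) : sigmoid (2 * ξ) = Real.exp ξ / (2 * cosh ξ) := by
  have h2 : Real.exp (-(2 * ξ)) = Real.exp (-ξ) * Real.exp (-ξ) := by
    rw [← Real.exp_add]; ring_nf
  have h1 : Real.exp ξ * Real.exp (-ξ) = 1 := by rw [← Real.exp_add]; simp
  rw [sigmoid_def, cosh_eq, h2]
  field_simp
  linear_combination (-Real.exp (-ξ)) * h1

lemma Real.log_sigmoid_two_mul (ξ : ℝ) :
    Real.log (sigmoid (2 * ξ)) = ξ - Real.log (2 * cosh ξ) := by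
  rw [sigmoid_two_mul, Real.log_div (Real.exp_pos ξ).ne' (by positivity), Real.log_exp]

lemma cexp_mul_cosh_cpow_eq_sigmoid (a b : ℂ) (ξ : ℝ) :
    Complex.exp ((a - b) * ξ) * (cosh ξ : ℂ) ^ (-(a + b)) =
      2 ^ (a + b) * ((sigmoid (2 * ξ) : ℂ) ^ a * (sigmoid (-(2 * ξ)) : ℂ) ^ b) := by
  rw [neg_mul_eq_mul_neg, show (2 : ℂ) = ((2 : ℝ) : ℂ) by norm_num,
    Complex.ofReal_cpow_eq_exp two_pos, Complex.ofReal_cpow_eq_exp (cosh_pos ξ),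
    Complex.ofReal_cpow_eq_exp (sigmoid_pos _), Complex.ofReal_cpow_eq_exp (sigmoid_pos _),
    log_sigmoid_two_mul, log_sigmoid_two_mul, cosh_neg, Real.log_mul two_ne_zero (cosh_pos ξ).ne',
    ← Complex.exp_add, ← Complex.exp_add, ← Complex.exp_add]
  congr 1
  push_cast
  ring

theorem integral_cexp_mul_cosh_cpow (a b : ℂ) :
    ∫ ξ : ℝ, Complex.exp ((a - b) * ξ) * (cosh ξ : ℂ) ^ (-(a + b)) =
      2 ^ (a + b - 1) * Complex.betaIntegral a b := by
  simp_rw [cexp_mul_cosh_cpow_eq_sigmoid, integral_const_mul]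
  rw [Measure.integral_comp_mul_left (fun u => (sigmoid u : ℂ) ^ a * (sigmoid (-u) : ℂ) ^ b) 2,
    ← Complex.betaIntegral_eq_integral_sigmoid, Complex.cpow_sub _ _ two_ne_zero, Complex.cpow_one,
    abs_of_pos (by norm_num), Complex.real_smul]
  push_cast
  ring

theorem integral_cexp_mul_cosh_rpow_neg {h : ℝ} (hh : 0 < h) (x : ℝ) :
    ∫ ξ : ℝ, Complex.exp (Complex.I * x * ξ) * ((cosh ξ ^ (-h) : ℝ) : ℂ) =
      2 ^ ((h : ℂ) - 1) * Complex.Gamma ((h + Complex.I * x) / 2) *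
        Complex.Gamma ((h - Complex.I * x) / 2) / Complex.Gamma h := by
  set a : ℂ := (h + Complex.I * x) / 2
  set b : ℂ := (h - Complex.I * x) / 2
  have hab : a + b = h := by ring
  have hre : 0 < a.re ∧ 0 < b.re := by simp [a, b, hh]
  have hintegrand (ξ : ℝ) : Complex.exp (Complex.I * x * ξ) * ((cosh ξ ^ (-h) : ℝ) : ℂ) =
      Complex.exp ((a - b) * ξ) * (cosh ξ : ℂ) ^ (-(a + b)) := by
    rw [Complex.ofReal_cpow (cosh_pos ξ).le, hab, show a - b = Complex.I * x by ring,
      Complex.ofReal_neg]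
  simp_rw [hintegrand]
  rw [integral_cexp_mul_cosh_cpow, mul_assoc _ (Complex.Gamma a),
    Complex.Gamma_mul_Gamma_eq_betaIntegral hre.1 hre.2, hab]
  field_simp [Complex.Gamma_ne_zero_of_re_pos (show 0 < (h : ℂ).re from hh)]

lemma two_cpow_mul_Gamma_mul_Gamma_div_eq_norm_sq {h : ℝ} (x : ℝ) :
    2 ^ ((h : ℂ) - 1) * Complex.Gamma ((h + Complex.I * x) / 2) *
        Complex.Gamma ((h - Complex.I * x) / 2) / Complex.Gamma h =
      ((2 ^ (h - 1) * ‖Complex.Gamma ((h + Complex.I * x) / 2)‖ ^ 2 / Real.Gamma h : ℝ) : ℂ) := by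
  have hconj : (h - Complex.I * x) / 2 = (starRingEnd ℂ) ((h + Complex.I * x) / 2) := by
    rw [map_div₀, map_add, map_mul, Complex.conj_I, Complex.conj_ofReal, Complex.conj_ofReal,
      map_ofNat]
    ring
  rw [hconj, Complex.Gamma_conj, mul_assoc _ (Complex.Gamma _), Complex.mul_conj',
    Complex.Gamma_ofReal, Complex.ofReal_div, Complex.ofReal_mul, Complex.ofReal_cpow two_pos.le]
  push_cast
  ring

theorem stmt17 :
    (∀ h : ℝ, 0 < h → ∀ x : ℝ,
      (∫ ξ : ℝ, Complex.exp (Complex.I * (x : ℂ) * (ξ : ℂ)) *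
          ((Real.cosh ξ ^ (-h) : ℝ) : ℂ)) =
        (2 : ℂ) ^ ((h : ℂ) - 1) * Complex.Gamma (((h : ℂ) + Complex.I * (x : ℂ)) / 2) *
          Complex.Gamma (((h : ℂ) - Complex.I * (x : ℂ)) / 2) / Complex.Gamma (h : ℂ) ∧
      (∫ ξ : ℝ, Complex.exp (Complex.I * (x : ℂ) * (ξ : ℂ)) *
          ((Real.cosh ξ ^ (-h) : ℝ) : ℂ)) =
        (((2 : ℝ) ^ (h - 1) *
          ‖Complex.Gamma (((h : ℂ) + Complex.I * (x : ℂ)) / 2)‖ ^ 2 /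
            Real.Gamma h : ℝ) : ℂ)) ∧
    ∀ h : ℝ → ℝ, (∀ t : ℝ, 0 < t → 0 < h t) → ∀ t : ℝ, 0 < t → ∀ x : ℝ,
      pCosh h t x =
        ((((2 : ℝ) ^ (h t - 2) / π) *
          ‖Complex.Gamma (((h t : ℂ) + Complex.I * (x : ℂ)) / 2)‖ ^ 2 /
            Real.Gamma (h t) : ℝ) : ℂ) := by
  refine ⟨fun h hh x => ⟨integral_cexp_mul_cosh_rpow_neg hh x, ?_⟩, fun h hpos t ht x => ?_⟩
  · rw [integral_cexp_mul_cosh_rpow_neg hh x, two_cpow_mul_Gamma_mul_Gamma_div_eq_norm_sq]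
  · have hexp (ξ : ℝ) : Real.exp (-(h t * Real.log (cosh ξ))) = cosh ξ ^ (-h t) := by
      rw [rpow_def_of_pos (cosh_pos ξ), mul_neg, mul_comm]
    simp_rw [pCosh, hexp, integral_cexp_mul_cosh_rpow_neg (hpos t ht) x,
      two_cpow_mul_Gamma_mul_Gamma_div_eq_norm_sq, ← Complex.ofReal_mul]
    congr 1
    rw [show h t - 1 = 1 + (h t - 2) by ring, rpow_add two_pos, rpow_one]
    field_simp
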